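/- arXiv:2003.05728 — 2 statements merged into one kernel-verified Lean document; each statement's English description precedes it below -/
import Mathlib

section
/- If the delays τ_1, ..., τ_m are rationally independent, then for the asymptotic transfer function T_a the supremum sup_{ω∈ℝ} ‖T_a(jω, τ⃗)‖ (spectral norm) equals its strong H-infinity norm, i.e., the H-infinity norm of T_a is insensitive to delay perturbations at rationally independent delay vectors. -/
open scoped Matrix.Norms.L2Operator ENNReal NNReal
open Matrix Filter Topology Set

noncomputable section

variable {n m p q v a b : ℕ}

/-- entrywise coercion of a real matrix to a complex matrix -/
def cmx (A : Matrix (Fin a) (Fin b) ℝ) : Matrix (Fin a) (Fin b) ℂ :=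
  A.map fun x => (x : ℂ)

/-- the characteristic matrix  λE - A₀ - ∑ᵢ Aᵢ e^{-λτᵢ}  of the DDAE -/
def charM (E A0 : Matrix (Fin n) (Fin n) ℝ) (A : Fin m → Matrix (Fin n) (Fin n) ℝ)
    (τ : Fin m → ℝ) (lam : ℂ) : Matrix (Fin n) (Fin n) ℂ :=
  lam • cmx E - cmx A0 - ∑ i, Complex.exp (-(lam * (τ i : ℂ))) • cmx (A i)

/-- the transfer function  T(jω) = C (jωE - A₀ - ∑ Aᵢe^{-jωτᵢ})⁻¹ B -/
def Tf (E A0 : Matrix (Fin n) (Fin n) ℝ) (A : Fin m → Matrix (Fin n) (Fin n) ℝ)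
    (B : Matrix (Fin n) (Fin p) ℝ) (C : Matrix (Fin q) (Fin n) ℝ)
    (τ : Fin m → ℝ) (ω : ℝ) : Matrix (Fin q) (Fin p) ℂ :=
  cmx C * (charM E A0 A τ (Complex.I * (ω : ℂ)))⁻¹ * cmx B

/-- the delay-difference matrix  UᵀA₀V + ∑ UᵀAᵢV e^{-jωτᵢ} -/
def M0tau (U V : Matrix (Fin n) (Fin v) ℝ) (A0 : Matrix (Fin n) (Fin n) ℝ)
    (A : Fin m → Matrix (Fin n) (Fin n) ℝ) (τ : Fin m → ℝ) (ω : ℝ) :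
    Matrix (Fin v) (Fin v) ℂ :=
  (cmx U)ᵀ * cmx A0 * cmx V +
    ∑ i, Complex.exp (-(Complex.I * (ω : ℂ) * (τ i : ℂ))) • ((cmx U)ᵀ * cmx (A i) * cmx V)

/-- the asymptotic transfer function  T_a(jω) -/
def Taf (U V : Matrix (Fin n) (Fin v) ℝ) (A0 : Matrix (Fin n) (Fin n) ℝ)
    (A : Fin m → Matrix (Fin n) (Fin n) ℝ) (B : Matrix (Fin n) (Fin p) ℝ)
    (C : Matrix (Fin q) (Fin n) ℝ) (τ : Fin m → ℝ) (ω : ℝ) : Matrix (Fin q) (Fin p) ℂ :=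
  -(cmx C * cmx V * (M0tau U V A0 A τ ω)⁻¹ * ((cmx U)ᵀ * cmx B))

/-- 𝔸₂₂(θ) = -UᵀA₀V - ∑ UᵀAᵢV e^{-jθᵢ} -/
def AA22 (U V : Matrix (Fin n) (Fin v) ℝ) (A0 : Matrix (Fin n) (Fin n) ℝ)
    (A : Fin m → Matrix (Fin n) (Fin n) ℝ) (θ : Fin m → ℝ) : Matrix (Fin v) (Fin v) ℂ :=
  -((cmx U)ᵀ * cmx A0 * cmx V) -
    ∑ i, Complex.exp (-(Complex.I * (θ i : ℂ))) • ((cmx U)ᵀ * cmx (A i) * cmx V)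

/-- 𝕋_a(θ) = CV 𝔸₂₂(θ)⁻¹ UᵀB -/
def TTa (U V : Matrix (Fin n) (Fin v) ℝ) (A0 : Matrix (Fin n) (Fin n) ℝ)
    (A : Fin m → Matrix (Fin n) (Fin n) ℝ) (B : Matrix (Fin n) (Fin p) ℝ)
    (C : Matrix (Fin q) (Fin n) ℝ) (θ : Fin m → ℝ) : Matrix (Fin q) (Fin p) ℂ :=
  cmx C * cmx V * (AA22 U V A0 A θ)⁻¹ * ((cmx U)ᵀ * cmx B)

/-- the H∞ norm, ⨆_ω of the largest singular value (= L2 operator norm),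
in the extended nonnegative reals -/
def Hinf (G : ℝ → Matrix (Fin a) (Fin b) ℂ) : ℝ≥0∞ :=
  ⨆ ω : ℝ, (‖G ω‖₊ : ℝ≥0∞)

/-- the strong H∞ norm at delay vector τ: the limit (= infimum, by monotonicity)
as ε → 0+ of the supremum of the H∞ norm over B(τ, ε) ∩ (ℝ⁺)^m -/
def strongHinf (G : (Fin m → ℝ) → ℝ → Matrix (Fin a) (Fin b) ℂ) (τ : Fin m → ℝ) : ℝ≥0∞ :=
  ⨅ (ε : ℝ) (_ : 0 < ε),
    ⨆ (τ' : Fin m → ℝ) (_ : dist τ' τ < ε ∧ ∀ i, 0 ≤ τ' i), Hinf (G τ')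

/-- ξ is a singular value of M iff ξ ≥ 0 and ξ² is an eigenvalue of MᴴM -/
def IsSingularValue (ξ : ℝ) (M : Matrix (Fin a) (Fin b) ℂ) : Prop :=
  0 ≤ ξ ∧ ∃ x : Fin b → ℂ, x ≠ 0 ∧ (Mᴴ * M) *ᵥ x = ((ξ ^ 2 : ℝ) : ℂ) • x

/-- strong exponential stability of the zero solution of the DDAE:
the characteristic matrix is invertible in the closed right half plane, robustly
with respect to small delay perturbations, and the associated delay difference
equation is strongly stable (the matrix 𝔸₂₂(θ) is invertible on the whole torus) -/
def StrongStable (E A0 : Matrix (Fin n) (Fin n) ℝ) (A : Fin m → Matrix (Fin n) (Fin n) ℝ)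
    (U V : Matrix (Fin n) (Fin v) ℝ) (τ : Fin m → ℝ) : Prop :=
  (∃ ε > (0 : ℝ), ∀ τ' : Fin m → ℝ, dist τ' τ < ε → (∀ i, 0 ≤ τ' i) →
      ∀ lam : ℂ, 0 ≤ lam.re → IsUnit (charM E A0 A τ' lam)) ∧
  ∀ θ : Fin m → ℝ, IsUnit (AA22 U V A0 A θ)


namespace KroneckerAux

open Real MeasureTheory Submodule intervalIntegral

instance fact2pi : Fact (0 < 2 * Real.pi) := ⟨by positivity⟩

variable {d : ℕ}

/-- multidimensional character on the torus -/
def charFn (k : Fin d → ℤ) : C((Fin d → AddCircle (2 * π)), ℂ) where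
  toFun z := ∏ i, fourier (k i) (z i)
  continuous_toFun := continuous_finset_prod _ fun i _ =>
    (map_continuous (fourier (k i))).comp (continuous_apply i)

lemma charFn_apply (k : Fin d → ℤ) (z : Fin d → AddCircle (2 * π)) :
    charFn k z = ∏ i, fourier (k i) (z i) := rfl

lemma charFn_zero : charFn (0 : Fin d → ℤ) = 1 := by
  ext z
  simp [charFn_apply, fourier_zero]

lemma charFn_add (k l : Fin d → ℤ) : charFn (k + l) = charFn k * charFn l := by
  ext z
  simp only [charFn_apply, ContinuousMap.mul_apply, Pi.add_apply, ← Finset.prod_mul_distrib]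
  exact Finset.prod_congr rfl fun i _ => fourier_add

lemma charFn_neg (k : Fin d → ℤ) : charFn (-k) = star (charFn k) := by
  ext z
  simp only [charFn_apply, ContinuousMap.star_apply, Pi.neg_apply, star_prod]
  refine Finset.prod_congr rfl fun i _ => ?_
  rw [fourier_neg]
  rfl

/-- the star subalgebra generated by the characters -/
def charAlg (d : ℕ) : StarSubalgebra ℂ C((Fin d → AddCircle (2 * π)), ℂ) where
  toSubalgebra := Algebra.adjoin ℂ (Set.range (charFn (d := d)))
  star_mem' := by
    show Algebra.adjoin ℂ (Set.range (charFn (d := d))) ≤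
      star (Algebra.adjoin ℂ (Set.range (charFn (d := d))))
    refine Algebra.adjoin_le ?_
    rintro - ⟨k, rfl⟩
    exact Algebra.subset_adjoin ⟨-k, charFn_neg k⟩

lemma charAlg_coe :
    Subalgebra.toSubmodule (charAlg d).toSubalgebra = span ℂ (Set.range (charFn (d := d))) := by
  apply Algebra.adjoin_eq_span_of_subset
  refine Subset.trans ?_ Submodule.subset_span
  intro x hx
  refine Submonoid.closure_induction (fun _ => id) ⟨0, charFn_zero⟩ ?_ hx
  rintro - - - - ⟨k, rfl⟩ ⟨l, rfl⟩
  exact ⟨k + l, charFn_add k l⟩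

lemma charAlg_separatesPoints : (charAlg d).SeparatesPoints := by
  intro z w hzw
  obtain ⟨i, hi⟩ := Function.ne_iff.mp hzw
  refine ⟨_, ⟨charFn (Pi.single i 1), Algebra.subset_adjoin ⟨Pi.single i 1, rfl⟩, rfl⟩, ?_⟩
  have hval : ∀ x : Fin d → AddCircle (2 * π), charFn (Pi.single i 1) x = AddCircle.toCircle (x i) := by
    intro x
    rw [charFn_apply, Finset.prod_eq_single i]
    · rw [Pi.single_eq_same, fourier_one]
    · intro j _ hj
      rw [Pi.single_eq_of_ne hj, fourier_zero]
    · simp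
  dsimp only
  rw [hval, hval]
  intro h
  rw [Circle.coe_inj] at h
  exact hi (AddCircle.injective_toCircle (by positivity : (0:ℝ) < 2 * π).ne' h)

lemma span_charFn_dense :
    (span ℂ (Set.range (charFn (d := d)))).topologicalClosure = ⊤ := by
  rw [← charAlg_coe]
  exact congr_arg (Subalgebra.toSubmodule <| StarSubalgebra.toSubalgebra ·)
    (ContinuousMap.starSubalgebra_topologicalClosure_eq_top_of_separatesPoints _
      charAlg_separatesPoints)


lemma fourier_coe_eq (n : ℤ) (x : ℝ) :
    fourier n ((x : ℝ) : AddCircle (2 * π)) = Complex.exp ((Complex.I * n) * x) := by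
  rw [fourier_coe_apply]
  congr 1
  have h : (π : ℂ) ≠ 0 := Complex.ofReal_ne_zero.mpr Real.pi_ne_zero
  field_simp
  push_cast
  ring

lemma integral_fourier_zero' {n : ℤ} (hn : n ≠ 0) :
    ∫ z : AddCircle (2 * π), fourier n z = 0 := by
  have hpre := AddCircle.integral_preimage (2 * π) 0 (fun z : AddCircle (2*π) => (fourier n z : ℂ))
  rw [zero_add] at hpre
  rw [← hpre, ← intervalIntegral.integral_of_le (by positivity : (0:ℝ) ≤ 2 * π)]
  have hc : (Complex.I * n) ≠ 0 :=
    mul_ne_zero Complex.I_ne_zero (Int.cast_ne_zero.mpr hn)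
  calc ∫ x in (0:ℝ)..(2*π), fourier n ((x:ℝ) : AddCircle (2*π))
      = ∫ x in (0:ℝ)..(2*π), Complex.exp ((Complex.I * n) * x) :=
        intervalIntegral.integral_congr fun x _ => fourier_coe_eq n x
    _ = 0 := by
        rw [integral_exp_mul_complex hc]
        have h1 : Complex.exp ((Complex.I * n) * ((2*π : ℝ) : ℂ)) = 1 := by
          push_cast
          rw [show Complex.I * (n:ℂ) * (2*(π:ℂ)) = (n:ℂ) * (2 * (π:ℂ) * Complex.I) by ring]
          exact Complex.exp_int_mul_two_pi_mul_I n
        rw [h1]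
        simp

lemma integral_charFn_eq (k : Fin d → ℤ) :
    ∫ z : Fin d → AddCircle (2 * π), (∏ i, fourier (k i) (z i)) =
      if k = 0 then ((2 * π) ^ d : ℝ) else 0 := by
  rw [MeasureTheory.volume_pi, MeasureTheory.integral_fintype_prod_eq_prod
    (f := fun i (x : AddCircle (2 * π)) => (fourier (k i) x : ℂ))]
  by_cases hk : k = 0
  · subst hk
    simp only [Pi.zero_apply, fourier_zero, if_true]
    rw [MeasureTheory.integral_const]
    simp [measureReal_def, AddCircle.measure_univ, ENNReal.toReal_ofReal Real.two_pi_pos.le,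
      ENNReal.toReal_ofReal Real.pi_pos.le]
  · rw [if_neg hk]
    obtain ⟨j, hj⟩ := Function.ne_iff.mp hk
    exact Finset.prod_eq_zero (Finset.mem_univ j) (integral_fourier_zero' hj)

lemma torus_volume :
    (volume (Set.univ : Set (Fin d → AddCircle (2 * π)))).toReal = (2 * π) ^ d := by
  rw [MeasureTheory.volume_pi, Measure.pi_univ]
  simp [AddCircle.measure_univ, ← ENNReal.ofReal_pow Real.two_pi_pos.le,
    ENNReal.toReal_ofReal (by positivity : (0:ℝ) ≤ (2*π)^d),
    ENNReal.toReal_ofReal Real.pi_pos.le]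


/-- value of a character along the one-parameter line -/
lemma charFn_line (k : Fin d → ℤ) (τ : Fin d → ℝ) (ω : ℝ) :
    charFn k (fun i => ((ω * τ i : ℝ) : AddCircle (2 * π))) =
      Complex.exp ((Complex.I * (∑ i, (k i : ℝ) * τ i)) * ω) := by
  rw [charFn_apply]
  have h : ∀ i : Fin d, fourier (k i) (((ω * τ i : ℝ)) : AddCircle (2 * π)) =
      Complex.exp ((Complex.I * (k i)) * ((ω * τ i : ℝ) : ℂ)) := fun i => fourier_coe_eq _ _
  simp only [h, ← Complex.exp_sum]
  congr 1
  push_cast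
  simp only [Finset.mul_sum, Finset.sum_mul]
  exact Finset.sum_congr rfl fun i _ => by ring

theorem denseRange_line (τ : Fin d → ℝ)
    (hindep : ∀ k : Fin d → ℤ, (∑ i, (k i : ℝ) * τ i) = 0 → k = 0) :
    DenseRange (fun ω : ℝ => fun i => ((ω * τ i : ℝ) : AddCircle (2 * π))) := by
  classical
  set φ : ℝ → (Fin d → AddCircle (2 * π)) :=
    fun ω => fun i => ((ω * τ i : ℝ) : AddCircle (2 * π)) with hφ
  have hφa : ∀ ω : ℝ, φ ω = fun i => ((ω * τ i : ℝ) : AddCircle (2 * π)) := fun _ => rfl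
  by_contra hnd
  unfold DenseRange Dense at hnd
  push_neg at hnd
  obtain ⟨z, hz⟩ := hnd
  obtain ⟨f, hf0, hf1, hf01⟩ := exists_continuous_zero_one_of_isClosed
    isClosed_closure (isClosed_singleton (x := z))
    (Set.disjoint_singleton_right.mpr hz)
  have hfc : Continuous f := map_continuous f
  have hfi : Integrable (fun x => f x) volume :=
    hfc.integrable_of_hasCompactSupport (HasCompactSupport.of_compactSpace f)
  set c : ℝ := ∫ x, f x with hcdef
  have hc : 0 < c := by
    rw [hcdef, integral_pos_iff_support_of_nonneg (fun x => (hf01 x).1) hfi]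
    have hsub : f ⁻¹' Set.Ioi 0 ⊆ Function.support f := fun x hx => ne_of_gt hx
    refine lt_of_lt_of_le ?_ (measure_mono hsub)
    refine ((hfc.isOpen_preimage _ isOpen_Ioi).measure_pos volume ⟨z, ?_⟩)
    simp [hf1 (Set.mem_singleton z)]
  set δ : ℝ := c / (4 * (2 * π) ^ d) with hδdef
  have hδ : 0 < δ := by positivity
  set f' : C((Fin d → AddCircle (2 * π)), ℂ) :=
    ⟨fun x => ((f x : ℝ) : ℂ), Complex.continuous_ofReal.comp hfc⟩ with hf'def
  have hf'i : Integrable (fun x => f' x) volume :=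
    (Complex.continuous_ofReal.comp hfc).integrable_of_hasCompactSupport
      (HasCompactSupport.of_compactSpace f')
  have hf'mem : f' ∈ closure ((span ℂ (Set.range (charFn (d := d))) : Submodule ℂ _) : Set _) := by
    have h1 : f' ∈ (span ℂ (Set.range (charFn (d := d)))).topologicalClosure := by
      rw [span_charFn_dense]; trivial
    rw [← Submodule.topologicalClosure_coe]; exact h1
  obtain ⟨g, hgmem, hgdist⟩ := Metric.mem_closure_iff.mp hf'mem δ hδ
  have hgc : Continuous g := map_continuous g
  have hgi : Integrable (fun x => g x) volume :=
    hgc.integrable_of_hasCompactSupport (HasCompactSupport.of_compactSpace g)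
  have hbound : ∀ x, ‖f' x - g x‖ ≤ δ := fun x => by
    have h := ContinuousMap.dist_apply_le_dist (f := f') (g := g) x
    rw [dist_eq_norm] at h
    exact h.trans hgdist.le
  obtain ⟨N, aa, gg, hsum⟩ := mem_span_set'.mp hgmem
  choose kk hkk using fun i : Fin N => (gg i).2
  set ck : Fin N → ℝ := fun i => ∑ j, (kk i j : ℝ) * τ j with hck
  set s0 : ℂ := ∑ i ∈ Finset.univ.filter (fun i => kk i = 0), aa i with hs0
  set R : ℝ := ∑ i ∈ Finset.univ.filter (fun i => ¬ kk i = 0), ‖aa i‖ * (2 / |ck i|) with hR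
  have hR0 : 0 ≤ R := Finset.sum_nonneg fun i _ => by positivity
  have hgeq : ∀ x, g x = ∑ i, aa i * charFn (kk i) x := by
    intro x
    rw [← hsum]
    simp only [ContinuousMap.coe_sum, Finset.sum_apply, ContinuousMap.coe_smul, Pi.smul_apply,
      smul_eq_mul]
    exact Finset.sum_congr rfl fun i _ => by rw [hkk i]
  -- SPACE SIDE
  have hspace : ∫ x, g x = s0 * (((2 * π) ^ d : ℝ) : ℂ) := by
    have h1 : ∫ x, g x = ∑ i, aa i * ∫ x, charFn (kk i) x := by
      simp only [funext hgeq]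
      rw [integral_finset_sum _ (f := fun i x => aa i * charFn (kk i) x) (fun i _ => ((continuous_const.mul
        (map_continuous (charFn (kk i)))).integrable_of_hasCompactSupport
          (HasCompactSupport.of_compactSpace _)))]
      exact Finset.sum_congr rfl fun i _ => integral_const_mul _ _
    rw [h1]
    have h2 : ∀ i : Fin N, aa i * ∫ x, charFn (kk i) x =
        if kk i = 0 then aa i * (((2 * π) ^ d : ℝ) : ℂ) else 0 := by
      intro i
      rw [show (∫ x, charFn (kk i) x) = ∫ z : Fin d → AddCircle (2 * π),
        (∏ j, fourier (kk i j) (z j)) from rfl, integral_charFn_eq (kk i)]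
      split <;> simp
    simp only [h2]
    rw [← Finset.sum_filter, hs0, Finset.sum_mul]
  have hcnorm : ‖(c : ℂ) - ∫ x, g x‖ ≤ δ * ((2 * π) ^ d : ℝ) := by
    have h1 : (c : ℂ) = ∫ x, f' x := by
      rw [hcdef]
      exact (integral_ofReal (f := fun x => f x)).symm
    rw [h1, ← integral_sub hf'i hgi]
    have h3 := MeasureTheory.norm_integral_le_of_norm_le_const
      (μ := volume) (f := fun x => f' x - g x) (C := δ) (Filter.Eventually.of_forall hbound)
    rwa [measureReal_def, torus_volume] at h3
  have hspace2 : c ≤ ‖s0‖ * ((2 * π) ^ d : ℝ) + δ * ((2 * π) ^ d : ℝ) := by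
    have h2 : ‖(c : ℂ)‖ = c := by
      rw [Complex.norm_real]; exact abs_of_pos hc
    calc c = ‖(c : ℂ)‖ := h2.symm
      _ = ‖(∫ x, g x) + ((c : ℂ) - ∫ x, g x)‖ := by congr 1; ring
      _ ≤ ‖∫ x, g x‖ + ‖(c : ℂ) - ∫ x, g x‖ := norm_add_le _ _
      _ ≤ ‖s0‖ * ((2 * π) ^ d : ℝ) + δ * ((2 * π) ^ d : ℝ) := by
          refine add_le_add ?_ hcnorm
          rw [hspace, norm_mul, Complex.norm_real, Real.norm_eq_abs,
            abs_of_pos (by positivity : (0:ℝ) < (2 * π) ^ d)]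
  -- TIME SIDE
  have htime : ∀ T : ℝ, 0 < T → ‖s0‖ * T ≤ δ * T + R := by
    intro T hT
    have hline : ∀ (i : Fin N) (ω : ℝ), charFn (kk i) (φ ω) =
        Complex.exp ((Complex.I * (ck i : ℝ)) * (ω : ℂ)) := by
      intro i ω
      rw [hφa ω]
      exact charFn_line (kk i) τ ω
    have hccont : ∀ (i : Fin N), Continuous fun ω : ℝ => (charFn (kk i)) (φ ω) := by
      intro i
      rw [show (fun ω : ℝ => (charFn (kk i)) (φ ω)) =
        fun ω : ℝ => Complex.exp ((Complex.I * (ck i : ℝ)) * (ω : ℂ)) from funext (hline i)]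
      exact Complex.continuous_exp.comp (continuous_const.mul Complex.continuous_ofReal)
    have hgline : ∫ ω in (0:ℝ)..T, g (φ ω) =
        ∑ i, aa i * ∫ ω in (0:ℝ)..T, charFn (kk i) (φ ω) := by
      simp only [funext hgeq]
      rw [intervalIntegral.integral_finset_sum (f := fun i ω => aa i * charFn (kk i) (φ ω)) (fun i _ => (Continuous.intervalIntegrable
        (continuous_const.mul (hccont i)) _ _))]
      exact Finset.sum_congr rfl fun i _ => intervalIntegral.integral_const_mul _ _
    have hint : ∀ i : Fin N, kk i = 0 → (∫ ω in (0:ℝ)..T, charFn (kk i) (φ ω)) = (T : ℂ) := by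
      intro i hi
      have hLL : ∀ ω : ℝ, charFn (kk i) (φ ω) = 1 := by
        intro ω; rw [hline i ω]
        have : ck i = 0 := by simp [hck, hi]
        simp [this]
      simp only [hLL]
      simp
    have hint2 : ∀ i : Fin N, ¬ kk i = 0 →
        ‖∫ ω in (0:ℝ)..T, charFn (kk i) (φ ω)‖ ≤ 2 / |ck i| := by
      intro i hi
      have hcki : ck i ≠ 0 := fun h => hi (hindep _ h)
      have hc' : (Complex.I * (ck i : ℝ)) ≠ 0 :=
        mul_ne_zero Complex.I_ne_zero (Complex.ofReal_ne_zero.mpr hcki)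
      have heval : (∫ ω in (0:ℝ)..T, charFn (kk i) (φ ω)) =
          (Complex.exp ((Complex.I * (ck i : ℝ)) * (T : ℂ)) -
            Complex.exp ((Complex.I * (ck i : ℝ)) * ((0:ℝ) : ℂ))) /
            (Complex.I * (ck i : ℝ)) := by
        rw [show (fun ω : ℝ => (charFn (kk i)) (φ ω)) = fun ω : ℝ =>
          Complex.exp ((Complex.I * (ck i)) * ω) from funext (hline i)]
        exact integral_exp_mul_complex hc'
      rw [heval, norm_div]
      have e1 : ∀ s : ℝ, ‖Complex.exp ((Complex.I * (ck i : ℝ)) * (s : ℂ))‖ = 1 := by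
        intro s
        rw [Complex.norm_exp]
        norm_num [Complex.mul_re, Complex.mul_im]
      have hnum : ‖Complex.exp ((Complex.I * (ck i : ℝ)) * (T : ℂ)) -
          Complex.exp ((Complex.I * (ck i : ℝ)) * 0)‖ ≤ 2 := by
        refine (norm_sub_le _ _).trans ?_
        rw [mul_zero, Complex.exp_zero, e1 T]
        norm_num
      have hden : ‖Complex.I * ((ck i : ℝ) : ℂ)‖ = |ck i| := by
        rw [norm_mul, Complex.norm_I, one_mul, Complex.norm_real, Real.norm_eq_abs]
      rw [hden]
      have habs : (0:ℝ) < |ck i| := abs_pos.mpr hcki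
      exact (div_le_div_iff_of_pos_right habs).mpr hnum
    have hgzero : ∀ ω : ℝ, f' (φ ω) = 0 := by
      intro ω
      have hmem : φ ω ∈ closure (Set.range φ) := subset_closure (Set.mem_range_self ω)
      have h0 := hf0 hmem
      simp only [hf'def, ContinuousMap.coe_mk]
      rw [show f (φ ω) = 0 from h0]
      simp
    have hgbound : ‖∫ ω in (0:ℝ)..T, g (φ ω)‖ ≤ δ * T := by
      have h4 : ∀ ω ∈ Set.uIoc (0:ℝ) T, ‖g (φ ω)‖ ≤ δ := by
        intro ω _
        have hb := hbound (φ ω)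
        rwa [hgzero ω, zero_sub, norm_neg] at hb
      have h5 := intervalIntegral.norm_integral_le_of_norm_le_const h4
      rwa [sub_zero, abs_of_pos hT] at h5
    have hsplit : (∑ i, aa i * ∫ ω in (0:ℝ)..T, charFn (kk i) (φ ω)) =
        s0 * (T : ℂ) + ∑ i ∈ Finset.univ.filter (fun i => ¬ kk i = 0),
          aa i * ∫ ω in (0:ℝ)..T, charFn (kk i) (φ ω) := by
      rw [← Finset.sum_filter_add_sum_filter_not Finset.univ (fun i => kk i = 0)]
      congr 1
      rw [hs0, Finset.sum_mul]
      exact Finset.sum_congr rfl fun i hi => by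
        rw [hint i (Finset.mem_filter.mp hi).2]
    have htail : ‖∑ i ∈ Finset.univ.filter (fun i => ¬ kk i = 0),
        aa i * ∫ ω in (0:ℝ)..T, charFn (kk i) (φ ω)‖ ≤ R := by
      refine (norm_sum_le _ _).trans ?_
      rw [hR]
      refine Finset.sum_le_sum fun i hi => ?_
      rw [norm_mul]
      exact mul_le_mul_of_nonneg_left (hint2 i (Finset.mem_filter.mp hi).2) (norm_nonneg _)
    have hfinal : ‖s0 * (T : ℂ)‖ ≤ δ * T + R := by
      have h5 : s0 * (T : ℂ) = (∫ ω in (0:ℝ)..T, g (φ ω)) -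
          ∑ i ∈ Finset.univ.filter (fun i => ¬ kk i = 0),
            aa i * ∫ ω in (0:ℝ)..T, charFn (kk i) (φ ω) := by
        rw [hgline, hsplit]; ring
      rw [h5]
      exact (norm_sub_le _ _).trans (add_le_add hgbound htail)
    rwa [norm_mul, Complex.norm_real, Real.norm_eq_abs, abs_of_pos hT] at hfinal
  -- choose T large enough
  have hs0small : ‖s0‖ ≤ δ := by
    by_contra hcon
    push_neg at hcon
    set T : ℝ := (R + 1) / (‖s0‖ - δ) with hTdef
    have hTpos : 0 < T := by
      apply div_pos (by linarith) (by linarith)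
    have h6 := htime T hTpos
    have h7 : (‖s0‖ - δ) * T = R + 1 := by
      rw [hTdef]
      field_simp
    nlinarith
  have hfin : c ≤ 2 * (δ * ((2 * π) ^ d : ℝ)) := by
    nlinarith [hspace2, hs0small, (by positivity : (0:ℝ) < (2 * π) ^ d)]
  have hδval : δ * ((2 * π) ^ d : ℝ) = c / 4 := by
    rw [hδdef]
    field_simp
  rw [hδval] at hfin
  linarith


end KroneckerAux

open Real

section TransferAux

variable (U V : Matrix (Fin n) (Fin v) ℝ) (A0 : Matrix (Fin n) (Fin n) ℝ)
  (A : Fin m → Matrix (Fin n) (Fin n) ℝ) (B : Matrix (Fin n) (Fin p) ℝ)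
  (C : Matrix (Fin q) (Fin n) ℝ)

lemma AA22_line (τ' : Fin m → ℝ) (ω : ℝ) :
    AA22 U V A0 A (fun i => ω * τ' i) = -(M0tau U V A0 A τ' ω) := by
  have h : ∀ i : Fin m, Complex.exp (-(Complex.I * (((ω * τ' i : ℝ)) : ℂ))) =
      Complex.exp (-(Complex.I * (ω : ℂ) * ((τ' i : ℝ) : ℂ))) := by
    intro i; congr 1; push_cast; ring
  simp only [AA22, M0tau, h, neg_add, sub_eq_add_neg]

lemma Taf_eq_TTa (hstab : ∀ θ : Fin m → ℝ, IsUnit (AA22 U V A0 A θ)) (τ' : Fin m → ℝ) (ω : ℝ) :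
    Taf U V A0 A B C τ' ω = TTa U V A0 A B C (fun i => ω * τ' i) := by
  have hM := AA22_line U V A0 A τ' ω
  have hu : IsUnit (M0tau U V A0 A τ' ω) := by
    have h1 := hstab (fun i => ω * τ' i)
    rw [hM] at h1
    simpa using h1.neg
  have hinv : (-(M0tau U V A0 A τ' ω))⁻¹ = -(M0tau U V A0 A τ' ω)⁻¹ := by
    apply Matrix.inv_eq_right_inv
    rw [Matrix.neg_mul, Matrix.mul_neg, neg_neg,
      Matrix.mul_nonsing_inv _ ((Matrix.isUnit_iff_isUnit_det _).mp hu)]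
  unfold Taf TTa
  rw [hM, hinv, Matrix.mul_neg, Matrix.neg_mul]

/-- the delay-difference matrix as a continuous function on the torus -/
def MT (z : Fin m → AddCircle (2 * π)) : Matrix (Fin v) (Fin v) ℂ :=
  -((cmx U)ᵀ * cmx A0 * cmx V) - ∑ i, fourier (-1) (z i) • ((cmx U)ᵀ * cmx (A i) * cmx V)

lemma MT_coe (θ : Fin m → ℝ) :
    MT U V A0 A (fun i => ((θ i : ℝ) : AddCircle (2 * π))) = AA22 U V A0 A θ := by
  unfold MT AA22
  congr 1
  refine Finset.sum_congr rfl fun i _ => ?_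
  congr 1
  rw [fourier_coe_apply]
  congr 1
  have h : (π : ℂ) ≠ 0 := Complex.ofReal_ne_zero.mpr Real.pi_ne_zero
  push_cast
  field_simp

/-- the asymptotic transfer function as a function on the torus -/
def TTfun (z : Fin m → AddCircle (2 * π)) : Matrix (Fin q) (Fin p) ℂ :=
  cmx C * cmx V * Ring.inverse (MT U V A0 A z) * ((cmx U)ᵀ * cmx B)

lemma TTfun_coe (hstab : ∀ θ : Fin m → ℝ, IsUnit (AA22 U V A0 A θ)) (θ : Fin m → ℝ) :
    TTfun U V A0 A B C (fun i => ((θ i : ℝ) : AddCircle (2 * π))) = TTa U V A0 A B C θ := by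
  unfold TTfun TTa
  rw [MT_coe, ← Matrix.nonsing_inv_eq_ringInverse]

lemma TTfun_cont (hstab : ∀ θ : Fin m → ℝ, IsUnit (AA22 U V A0 A θ)) :
    Continuous (TTfun U V A0 A B C) := by
  haveI : CompleteSpace (Matrix (Fin v) (Fin v) ℂ) := FiniteDimensional.complete ℂ _
  have hMT : Continuous (MT U V A0 A) := by
    refine continuous_const.sub (continuous_finset_sum _ fun i _ => Continuous.smul (f := fun z : Fin m → AddCircle (2 * π) => fourier (-1) (z i))
      (g := fun _ => ((cmx U)ᵀ * cmx (A i) * cmx V)) ?_ continuous_const)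
    exact (map_continuous (fourier (-1))).comp (continuous_apply i)
  have hunit : ∀ z, IsUnit (MT U V A0 A z) := by
    intro z
    obtain ⟨θ, hθ⟩ : ∃ θ : Fin m → ℝ, (fun i => ((θ i : ℝ) : AddCircle (2 * π))) = z := by
      choose θ hθ using fun i => QuotientAddGroup.mk_surjective (z i)
      exact ⟨θ, funext hθ⟩
    rw [← hθ, MT_coe]
    exact hstab θ
  have hinv : Continuous fun z => Ring.inverse (MT U V A0 A z) := by
    rw [continuous_iff_continuousAt]
    intro z
    obtain ⟨u, hu⟩ := hunit z
    have h8 : ContinuousAt (Ring.inverse : Matrix (Fin v) (Fin v) ℂ → Matrix (Fin v) (Fin v) ℂ)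
        (MT U V A0 A z) := by
      rw [← hu]
      exact NormedRing.inverse_continuousAt u
    exact h8.comp hMT.continuousAt
  let L : Matrix (Fin v) (Fin v) ℂ →ₗ[ℂ] Matrix (Fin q) (Fin p) ℂ :=
    { toFun := fun X => cmx C * cmx V * X * ((cmx U)ᵀ * cmx B),
      map_add' := fun X Y => by simp only [Matrix.mul_add, Matrix.add_mul],
      map_smul' := fun r X => by simp only [RingHom.id_apply, Matrix.mul_smul, Matrix.smul_mul] }
  exact (L.continuous_of_finiteDimensional).comp hinv

end TransferAux
theorem Hinf_Ta_eq_strongHinf_of_rationally_independent {n m p q v : ℕ}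
    (A0 : Matrix (Fin n) (Fin n) ℝ) (A : Fin m → Matrix (Fin n) (Fin n) ℝ)
    (B : Matrix (Fin n) (Fin p) ℝ) (C : Matrix (Fin q) (Fin n) ℝ)
    (U V : Matrix (Fin n) (Fin v) ℝ) (τ : Fin m → ℝ)
    (hA0 : IsUnit (Uᵀ * A0 * V))
    (hstab : ∀ θ : Fin m → ℝ, IsUnit (AA22 U V A0 A θ))
    (hτ : ∀ i, 0 < τ i)
    (hindep : ∀ k : Fin m → ℤ, (∑ i, (k i : ℝ) * τ i) = 0 → k = 0) :
    Hinf (Taf U V A0 A B C τ) = strongHinf (fun τ' ω => Taf U V A0 A B C τ' ω) τ := by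
  classical
  haveI : Fact (0 < 2 * Real.pi) := ⟨by positivity⟩
  have key : ∀ (τ' : Fin m → ℝ) (ω : ℝ),
      Taf U V A0 A B C τ' ω = TTa U V A0 A B C (fun i => ω * τ' i) :=
    Taf_eq_TTa U V A0 A B C hstab
  set S : ℝ≥0∞ := ⨆ θ : Fin m → ℝ, (‖TTa U V A0 A B C θ‖₊ : ℝ≥0∞) with hS
  have h1 : Hinf (Taf U V A0 A B C τ) ≤ strongHinf (fun τ' ω => Taf U V A0 A B C τ' ω) τ := by
    simp only [strongHinf]
    refine le_iInf fun ε => le_iInf fun hε => ?_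
    refine le_iSup_of_le τ ?_
    exact le_iSup_of_le ⟨by simpa [dist_self] using hε, fun i => (hτ i).le⟩ le_rfl
  have h2 : strongHinf (fun τ' ω => Taf U V A0 A B C τ' ω) τ ≤ S := by
    simp only [strongHinf]
    refine iInf_le_of_le 1 (iInf_le_of_le one_pos ?_)
    refine iSup_le fun τ' => iSup_le fun _ => ?_
    simp only [Hinf]
    refine iSup_le fun ω => ?_
    rw [key τ' ω]
    exact le_iSup (fun θ => (‖TTa U V A0 A B C θ‖₊ : ℝ≥0∞)) _
  have h3 : S ≤ Hinf (Taf U V A0 A B C τ) := by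
    refine iSup_le fun θ => ?_
    refine ENNReal.le_of_forall_pos_le_add fun ε hε _ => ?_
    have hdense := KroneckerAux.denseRange_line τ hindep
    have hcont : Continuous fun z => ‖TTfun U V A0 A B C z‖ :=
      (TTfun_cont U V A0 A B C hstab).norm
    set z0 : Fin m → AddCircle (2 * Real.pi) := fun i => ((θ i : ℝ) : AddCircle (2 * Real.pi))
      with hz0
    have hopen : IsOpen {z : Fin m → AddCircle (2 * Real.pi) |
        ‖TTfun U V A0 A B C z0‖ - (ε : ℝ) < ‖TTfun U V A0 A B C z‖} :=
      isOpen_lt continuous_const hcont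
    have hne : {z : Fin m → AddCircle (2 * Real.pi) |
        ‖TTfun U V A0 A B C z0‖ - (ε : ℝ) < ‖TTfun U V A0 A B C z‖}.Nonempty := by
      refine ⟨z0, ?_⟩
      simp only [Set.mem_setOf_eq]
      have : (0:ℝ) < ε := hε
      linarith
    obtain ⟨ω, hω⟩ := hdense.exists_mem_open hopen hne
    simp only [Set.mem_setOf_eq] at hω
    have e1 : ‖TTfun U V A0 A B C z0‖ = ‖TTa U V A0 A B C θ‖ := by
      rw [hz0, TTfun_coe U V A0 A B C hstab θ]
    have e2 : ‖TTfun U V A0 A B C (fun i => ((ω * τ i : ℝ) : AddCircle (2 * Real.pi)))‖ =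
        ‖Taf U V A0 A B C τ ω‖ := by
      rw [TTfun_coe U V A0 A B C hstab (fun i => ω * τ i), ← key τ ω]
    rw [e1] at hω
    rw [e2] at hω
    have hreal : ‖TTa U V A0 A B C θ‖ ≤ ‖Taf U V A0 A B C τ ω‖ + (ε : ℝ) := by linarith
    have hnn : ‖TTa U V A0 A B C θ‖₊ ≤ ‖Taf U V A0 A B C τ ω‖₊ + ε := by
      rw [← NNReal.coe_le_coe]
      push_cast
      exact hreal
    calc (‖TTa U V A0 A B C θ‖₊ : ℝ≥0∞) ≤ ((‖Taf U V A0 A B C τ ω‖₊ + ε : ℝ≥0) : ℝ≥0∞) :=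
          ENNReal.coe_le_coe.mpr hnn
      _ = (‖Taf U V A0 A B C τ ω‖₊ : ℝ≥0∞) + (ε : ℝ≥0∞) := by rw [ENNReal.coe_add]
      _ ≤ Hinf (Taf U V A0 A B C τ) + (ε : ℝ≥0∞) := by
          refine add_le_add ?_ le_rfl
          simp only [Hinf]
          exact le_iSup (fun ω => (‖Taf U V A0 A B C τ ω‖₊ : ℝ≥0∞)) ω
  exact le_antisymm h1 (h2.trans h3)
end
end

section
/- Let 𝕋_a(θ⃗) = CV 𝔸₂₂(θ⃗)^{-1} U^T B with 𝔸₂₂(θ⃗) = -U^T A_0 V - Σ_{i=1}^m U^T A_i V e^{-jθ_i}. A real number ξ > 0 is a singular value of 𝕋_a(θ⃗) if and only if there exist nonzero vectors u_a, v_a satisfying 𝔸₂₂(θ⃗)u_a = ξ^{-1} U^T B B^T U v_a and ξ^{-1} V^T C^T C V u_a = 𝔸₂₂(θ⃗)* v_a, i.e., the 2v×2v matrix [[𝔸₂₂(θ⃗), -ξ^{-1}U^TBB^TU],[ξ^{-1}V^TC^TCV, -𝔸₂₂(θ⃗)*]] is singular. -/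
open scoped Matrix.Norms.L2Operator ENNReal NNReal
open Matrix Filter Topology Set

noncomputable section

variable {n m p q v a b : ℕ}

lemma cmx_conjTranspose' {a b : ℕ} (M : Matrix (Fin a) (Fin b) ℝ) : (cmx M)ᴴ = (cmx M)ᵀ := by
  ext i j; simp [cmx, conjTranspose_apply]

lemma cmx_transpose_conjTranspose' {a b : ℕ} (M : Matrix (Fin a) (Fin b) ℝ) :
    ((cmx M)ᵀ)ᴴ = cmx M := by
  ext i j; simp [cmx, conjTranspose_apply]

lemma sv_iff {v p q : ℕ} (𝔸 : Matrix (Fin v) (Fin v) ℂ)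
    (P : Matrix (Fin v) (Fin p) ℂ) (Q : Matrix (Fin q) (Fin v) ℂ)
    (h𝔸 : IsUnit 𝔸) (ξ : ℝ) (hξ : 0 < ξ) :
    IsSingularValue ξ (Q * 𝔸⁻¹ * P) ↔
      ∃ ua va : Fin v → ℂ, ua ≠ 0 ∧ va ≠ 0 ∧
        𝔸 *ᵥ ua = ξ⁻¹ • ((P * Pᴴ) *ᵥ va) ∧
        ξ⁻¹ • ((Qᴴ * Q) *ᵥ ua) = 𝔸ᴴ *ᵥ va := by
  have hdet : IsUnit 𝔸.det := (Matrix.isUnit_iff_isUnit_det 𝔸).mp h𝔸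
  have h1 : 𝔸 * 𝔸⁻¹ = 1 := Matrix.mul_nonsing_inv 𝔸 hdet
  have h2 : 𝔸⁻¹ * 𝔸 = 1 := Matrix.nonsing_inv_mul 𝔸 hdet
  have h3 : 𝔸ᴴ * 𝔸⁻¹ᴴ = 1 := by rw [← conjTranspose_mul, h2, conjTranspose_one]
  have h4 : 𝔸⁻¹ᴴ * 𝔸ᴴ = 1 := by rw [← conjTranspose_mul, h1, conjTranspose_one]
  have hA1 : ∀ y, 𝔸 *ᵥ (𝔸⁻¹ *ᵥ y) = y := fun y => by rw [mulVec_mulVec, h1, one_mulVec]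
  have hA2 : ∀ y, 𝔸⁻¹ *ᵥ (𝔸 *ᵥ y) = y := fun y => by rw [mulVec_mulVec, h2, one_mulVec]
  have hA3 : ∀ y, 𝔸ᴴ *ᵥ (𝔸⁻¹ᴴ *ᵥ y) = y := fun y => by rw [mulVec_mulVec, h3, one_mulVec]
  have hA4 : ∀ y, 𝔸⁻¹ᴴ *ᵥ (𝔸ᴴ *ᵥ y) = y := fun y => by rw [mulVec_mulVec, h4, one_mulVec]
  have hξc : (ξ : ℂ) ≠ 0 := by exact_mod_cast hξ.ne'
  have hsm : ∀ {k : ℕ} (w : Fin k → ℂ), (ξ⁻¹ : ℝ) • w = ((ξ : ℂ))⁻¹ • w := fun w => by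
    rw [← algebraMap_smul ℂ (ξ⁻¹ : ℝ) w]
    norm_num
  set T := Q * 𝔸⁻¹ * P with hT
  have hTH : Tᴴ = Pᴴ * (𝔸⁻¹ᴴ * Qᴴ) := by
    simp [hT, conjTranspose_mul, Matrix.mul_assoc]
  constructor
  · rintro ⟨-, x, hx, hxe⟩
    rw [show ((ξ ^ 2 : ℝ) : ℂ) • x = ((ξ : ℂ) ^ 2) • x by push_cast; ring_nf] at hxe
    set ua := 𝔸⁻¹ *ᵥ (P *ᵥ x) with hua
    set z := (ξ : ℂ)⁻¹ • (T *ᵥ x) with hz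
    set va := 𝔸⁻¹ᴴ *ᵥ (Qᴴ *ᵥ z) with hva
    have hTx : T *ᵥ x = Q *ᵥ (𝔸⁻¹ *ᵥ (P *ᵥ x)) := by
      simp [hT, mulVec_mulVec, Matrix.mul_assoc]
    have hTHz : Tᴴ *ᵥ z = (ξ : ℂ) • x := by
      rw [hz, mulVec_smul, mulVec_mulVec, hxe, smul_smul]
      congr 1
      field_simp
    have hPHva : Pᴴ *ᵥ va = Tᴴ *ᵥ z := by
      rw [hva, hTH, mulVec_mulVec, mulVec_mulVec, Matrix.mul_assoc]
    refine ⟨ua, va, ?_, ?_, ?_, ?_⟩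
    · intro h0
      have hPx : P *ᵥ x = 0 := by
        have := hA1 (P *ᵥ x); rw [← hua, h0, mulVec_zero] at this; exact this.symm
      have hz0 : (Tᴴ * T) *ᵥ x = 0 := by
        rw [← mulVec_mulVec, hTx, hPx, mulVec_zero, mulVec_zero, mulVec_zero]
      have : ((ξ : ℂ) ^ 2) • x = 0 := by rw [← hxe]; exact hz0
      exact hx ((smul_eq_zero.mp this).resolve_left (pow_ne_zero 2 hξc))
    · intro h0
      have : Tᴴ *ᵥ z = 0 := by rw [← hPHva, h0, mulVec_zero]
      rw [hTHz] at this
      exact hx ((smul_eq_zero.mp this).resolve_left hξc)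
    · rw [hsm]
      have : (P * Pᴴ) *ᵥ va = P *ᵥ ((ξ : ℂ) • x) := by
        rw [← mulVec_mulVec, hPHva, hTHz]
      rw [this, mulVec_smul, smul_smul, inv_mul_cancel₀ hξc, one_smul]
      exact hA1 (P *ᵥ x)
    · rw [hsm]
      have h5 : 𝔸ᴴ *ᵥ va = Qᴴ *ᵥ z := hA3 _
      rw [h5, hz, mulVec_smul, hTx]
      congr 1
      simp [hua, mulVec_mulVec, Matrix.mul_assoc]
  · rintro ⟨ua, va, hua, hva, e1, e2⟩
    rw [hsm] at e1 e2
    set x := (ξ : ℂ)⁻¹ • (Pᴴ *ᵥ va) with hx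
    have hPHva : Pᴴ *ᵥ va = (ξ : ℂ) • x := by
      rw [hx, smul_smul, mul_inv_cancel₀ hξc, one_smul]
    have hPx : P *ᵥ x = 𝔸 *ᵥ ua := by
      rw [hx, mulVec_smul, mulVec_mulVec, ← e1]
    have hTx : T *ᵥ x = Q *ᵥ ua := by
      rw [hT, Matrix.mul_assoc, ← mulVec_mulVec, ← mulVec_mulVec, hPx, hA2]
    have hQQ : (Qᴴ * Q) *ᵥ ua = (ξ : ℂ) • (𝔸ᴴ *ᵥ va) := by
      rw [← e2, smul_smul, mul_inv_cancel₀ hξc, one_smul]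
    refine ⟨hξ.le, x, ?_, ?_⟩
    · intro h0
      have : 𝔸 *ᵥ ua = 0 := by rw [← hPx, h0, mulVec_zero]
      have : ua = 0 := by rw [← hA2 ua, this, mulVec_zero]
      exact hua this
    · have k1 : Qᴴ *ᵥ (Q *ᵥ ua) = (ξ : ℂ) • (𝔸ᴴ *ᵥ va) := by rw [mulVec_mulVec]; exact hQQ
      have k2 : (𝔸⁻¹ᴴ * Qᴴ) *ᵥ (Q *ᵥ ua) = (ξ : ℂ) • va := by
        rw [← mulVec_mulVec, k1, mulVec_smul, hA4]
      have k3 : Tᴴ *ᵥ (Q *ᵥ ua) = (ξ : ℂ) • (Pᴴ *ᵥ va) := by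
        rw [hTH, ← mulVec_mulVec, k2, mulVec_smul]
      rw [show ((ξ ^ 2 : ℝ) : ℂ) • x = ((ξ : ℂ) ^ 2) • x by push_cast; ring_nf]
      rw [← mulVec_mulVec, hTx, k3, hPHva, smul_smul, sq]

lemma block_iff {v : ℕ} (𝔸 MB MC : Matrix (Fin v) (Fin v) ℂ) (h𝔸 : IsUnit 𝔸) (ξ : ℝ) :
    (∃ ua va : Fin v → ℂ, ua ≠ 0 ∧ va ≠ 0 ∧
        𝔸 *ᵥ ua = ξ⁻¹ • (MB *ᵥ va) ∧ ξ⁻¹ • (MC *ᵥ ua) = 𝔸ᴴ *ᵥ va) ↔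
      (Matrix.fromBlocks 𝔸 (-(ξ⁻¹ • MB)) (ξ⁻¹ • MC) (-𝔸ᴴ)).det = 0 := by
  have hdet : IsUnit 𝔸.det := (Matrix.isUnit_iff_isUnit_det 𝔸).mp h𝔸
  have h1 : 𝔸 * 𝔸⁻¹ = 1 := Matrix.mul_nonsing_inv 𝔸 hdet
  have h2 : 𝔸⁻¹ * 𝔸 = 1 := Matrix.nonsing_inv_mul 𝔸 hdet
  have h4 : 𝔸⁻¹ᴴ * 𝔸ᴴ = 1 := by rw [← conjTranspose_mul, h1, conjTranspose_one]
  have hA2 : ∀ y, 𝔸⁻¹ *ᵥ (𝔸 *ᵥ y) = y := fun y => by rw [mulVec_mulVec, h2, one_mulVec]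
  have hA4 : ∀ y, 𝔸⁻¹ᴴ *ᵥ (𝔸ᴴ *ᵥ y) = y := fun y => by rw [mulVec_mulVec, h4, one_mulVec]
  rw [← Matrix.exists_mulVec_eq_zero_iff]
  have hsum : ∀ (f g : Fin v → ℂ), (Sum.elim f g = (0 : Fin v ⊕ Fin v → ℂ)) ↔ f = 0 ∧ g = 0 := by
    intro f g
    constructor
    · intro h
      exact ⟨funext fun i => congrFun h (Sum.inl i), funext fun i => congrFun h (Sum.inr i)⟩
    · rintro ⟨rfl, rfl⟩; funext i; cases i <;> rfl
  have hmv : ∀ y : Fin v ⊕ Fin v → ℂ,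
      (Matrix.fromBlocks 𝔸 (-(ξ⁻¹ • MB)) (ξ⁻¹ • MC) (-𝔸ᴴ)) *ᵥ y = 0 ↔
      (𝔸 *ᵥ (y ∘ Sum.inl) = ξ⁻¹ • (MB *ᵥ (y ∘ Sum.inr)) ∧
       ξ⁻¹ • (MC *ᵥ (y ∘ Sum.inl)) = 𝔸ᴴ *ᵥ (y ∘ Sum.inr)) := by
    intro y
    rw [Matrix.fromBlocks_mulVec, hsum, neg_mulVec, neg_mulVec, add_neg_eq_zero,
      add_neg_eq_zero, smul_mulVec, smul_mulVec]
  constructor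
  · rintro ⟨ua, va, hua, hva, e1, e2⟩
    refine ⟨Sum.elim ua va, ?_, (hmv _).mpr ⟨?_, ?_⟩⟩
    · intro h; exact hua (funext fun i => congrFun h (Sum.inl i))
    · simpa using e1
    · simpa using e2
  · rintro ⟨y, hy, hy0⟩
    obtain ⟨e1, e2⟩ := (hmv y).mp hy0
    have h12 : y ∘ Sum.inl = 0 → y ∘ Sum.inr = 0 := by
      intro h
      rw [h, mulVec_zero, smul_zero] at e2
      rw [← hA4 (y ∘ Sum.inr), ← e2, mulVec_zero]
    have hy1 : y ∘ Sum.inl ≠ 0 := by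
      intro h
      have hh := h12 h
      apply hy
      funext i
      cases i with
      | inl j => exact congrFun h j
      | inr j => exact congrFun hh j
    have hy2 : y ∘ Sum.inr ≠ 0 := by
      intro h
      apply hy1
      rw [h, mulVec_zero, smul_zero] at e1
      rw [← hA2 (y ∘ Sum.inl), e1, mulVec_zero]
    exact ⟨y ∘ Sum.inl, y ∘ Sum.inr, hy1, hy2, e1, e2⟩


theorem singular_value_TTa_iff_block_singular {n m p q v : ℕ}
    (A0 : Matrix (Fin n) (Fin n) ℝ) (A : Fin m → Matrix (Fin n) (Fin n) ℝ)
    (B : Matrix (Fin n) (Fin p) ℝ) (C : Matrix (Fin q) (Fin n) ℝ)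
    (U V : Matrix (Fin n) (Fin v) ℝ) (θ : Fin m → ℝ)
    (hinv : IsUnit (AA22 U V A0 A θ)) (ξ : ℝ) (hξ : 0 < ξ) :
    (IsSingularValue ξ (TTa U V A0 A B C θ) ↔
      ∃ ua va : Fin v → ℂ, ua ≠ 0 ∧ va ≠ 0 ∧
        (AA22 U V A0 A θ) *ᵥ ua =
          ξ⁻¹ • (((cmx U)ᵀ * cmx B * (cmx B)ᵀ * cmx U) *ᵥ va) ∧
        ξ⁻¹ • (((cmx V)ᵀ * (cmx C)ᵀ * cmx C * cmx V) *ᵥ ua) =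
          (AA22 U V A0 A θ)ᴴ *ᵥ va) ∧
    (IsSingularValue ξ (TTa U V A0 A B C θ) ↔
      (Matrix.fromBlocks
        (AA22 U V A0 A θ)
        (-(ξ⁻¹ • ((cmx U)ᵀ * cmx B * (cmx B)ᵀ * cmx U)))
        (ξ⁻¹ • ((cmx V)ᵀ * (cmx C)ᵀ * cmx C * cmx V))
        (-(AA22 U V A0 A θ)ᴴ)).det = 0) := by
  have hPH : ((cmx U)ᵀ * cmx B)ᴴ = (cmx B)ᵀ * cmx U := by
    rw [conjTranspose_mul, cmx_conjTranspose', cmx_transpose_conjTranspose']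
  have hQH : (cmx C * cmx V)ᴴ = (cmx V)ᵀ * (cmx C)ᵀ := by
    rw [conjTranspose_mul, cmx_conjTranspose', cmx_conjTranspose']
  have key := sv_iff (AA22 U V A0 A θ) ((cmx U)ᵀ * cmx B) (cmx C * cmx V) hinv ξ hξ
  rw [hPH, hQH] at key
  have h1 : IsSingularValue ξ (TTa U V A0 A B C θ) ↔
      ∃ ua va : Fin v → ℂ, ua ≠ 0 ∧ va ≠ 0 ∧
        (AA22 U V A0 A θ) *ᵥ ua =
          ξ⁻¹ • (((cmx U)ᵀ * cmx B * (cmx B)ᵀ * cmx U) *ᵥ va) ∧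
        ξ⁻¹ • (((cmx V)ᵀ * (cmx C)ᵀ * cmx C * cmx V) *ᵥ ua) =
          (AA22 U V A0 A θ)ᴴ *ᵥ va := by
    simp only [TTa]
    simp only [Matrix.mul_assoc] at key ⊢
    exact key
  exact ⟨h1, h1.trans (block_iff _ _ _ hinv ξ)⟩
end
end
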